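/- Let d ≥ 1 be an integer, γ ∈ (1, (d+2)/d), ρ > 0 and u ∈ ℝ^d, and let M_{ρ,u} be the positive-part equilibrium function. Then ∫_{ℝ^d} |v|² M_{ρ,u}(v) dv = ρ |u|² + d ρ^γ. -/

import Mathlib

open MeasureTheory Real

noncomputable section
open Set


lemma realBeta {a b : ℝ} (ha : 0 < a) (hb : 0 < b) :
    ∫ x in (0:ℝ)..1, x ^ (a-1) * (1-x) ^ (b-1)
      = Real.Gamma a * Real.Gamma b / Real.Gamma (a+b) := by
  have key := Complex.Gamma_mul_Gamma_eq_betaIntegral (s := (a:ℂ)) (t := (b:ℂ))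
    (by simpa using ha) (by simpa using hb)
  have hcast : Complex.betaIntegral (a:ℂ) (b:ℂ)
      = ((∫ x in (0:ℝ)..1, x ^ (a-1) * (1-x) ^ (b-1) : ℝ) : ℂ) := by
    rw [Complex.betaIntegral, ← intervalIntegral.integral_ofReal]
    apply intervalIntegral.integral_congr
    intro x hx
    rw [uIcc_of_le zero_le_one] at hx
    have hx0 : (0:ℝ) ≤ x := hx.1
    have hx1 : (0:ℝ) ≤ 1 - x := by linarith [hx.2]
    show (x:ℂ) ^ ((a:ℂ) - 1) * (1 - (x:ℂ)) ^ ((b:ℂ) - 1) = ((x ^ (a-1) * (1-x) ^ (b-1) : ℝ) : ℂ)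
    rw [show ((1:ℂ) - (x:ℂ)) = ((1 - x : ℝ) : ℂ) by push_cast; ring,
      show ((a:ℂ) - 1) = ((a - 1 : ℝ) : ℂ) by push_cast; ring,
      show ((b:ℂ) - 1) = ((b - 1 : ℝ) : ℂ) by push_cast; ring,
      ← Complex.ofReal_cpow hx0, ← Complex.ofReal_cpow hx1, ← Complex.ofReal_mul]
  have hG : Complex.Gamma ((a:ℂ)+(b:ℂ)) = ((Real.Gamma (a+b) : ℝ) : ℂ) := by
    rw [← Complex.ofReal_add, Complex.Gamma_ofReal]
  rw [Complex.Gamma_ofReal, Complex.Gamma_ofReal, hG, hcast, ← Complex.ofReal_mul,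
    ← Complex.ofReal_mul] at key
  have := Complex.ofReal_injective key
  have hne : Real.Gamma (a+b) ≠ 0 := (Real.Gamma_pos_of_pos (by linarith)).ne'
  field_simp
  linarith [this]

lemma J3 {p s : ℝ} (hp : 0 < p) (hs : 0 < s) :
    ∫ x in Ioi (0:ℝ), x ^ (p-1) * (max (1-x) 0) ^ s
      = Real.Gamma p * Real.Gamma (s+1) / Real.Gamma (p+s+1) := by
  have h01 : Ioc (0:ℝ) 1 ∪ Ioi 1 = Ioi 0 := Ioc_union_Ioi_eq_Ioi zero_le_one
  have hzero : ∀ x ∈ Ioi (1:ℝ), x ^ (p-1) * (max (1-x) 0) ^ s = 0 := by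
    intro x hx
    rw [max_eq_right (by simp at hx; linarith), Real.zero_rpow hs.ne', mul_zero]
  have hcont : Continuous fun x : ℝ => (max (1-x) 0) ^ s := by
    rw [continuous_iff_continuousAt]
    intro x
    exact (Real.continuousAt_rpow_const _ _ (Or.inr hs.le)).comp
      (by fun_prop : Continuous fun x : ℝ => max (1-x) 0).continuousAt
  have hii : IntervalIntegrable (fun x : ℝ => x ^ (p-1) * (max (1-x) 0) ^ s)
      volume 0 1 :=
    (intervalIntegral.intervalIntegrable_rpow' (by linarith)).mul_continuousOn
      hcont.continuousOn
  have hint1 : IntegrableOn (fun x : ℝ => x ^ (p-1) * (max (1-x) 0) ^ s) (Ioc 0 1) :=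
    (intervalIntegrable_iff_integrableOn_Ioc_of_le zero_le_one).mp hii
  have hint2 : IntegrableOn (fun x : ℝ => x ^ (p-1) * (max (1-x) 0) ^ s) (Ioi 1) := by
    rw [integrableOn_congr_fun hzero measurableSet_Ioi]
    exact integrableOn_zero
  rw [← h01, setIntegral_union (Ioc_disjoint_Ioi le_rfl) measurableSet_Ioi hint1 hint2]
  rw [setIntegral_congr_fun measurableSet_Ioi hzero, integral_zero, add_zero]
  rw [← intervalIntegral.integral_of_le zero_le_one]
  have : ∫ x in (0:ℝ)..1, x ^ (p-1) * (max (1-x) 0) ^ s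
      = ∫ x in (0:ℝ)..1, x ^ (p-1) * (1-x) ^ ((s+1)-1) := by
    apply intervalIntegral.integral_congr
    intro x hx
    rw [uIcc_of_le zero_le_one] at hx
    have h1 : max (1-x) 0 = 1 - x := max_eq_left (by linarith [hx.2])
    simp only [h1, add_sub_cancel_right]
  rw [this, realBeta hp (by linarith), show p + (s+1) = p + s + 1 by ring]

lemma J_eq {K s p : ℝ} (hK : 0 < K) (hs : 0 < s) (hp : 0 < p) :
    ∫ y in Ioi (0:ℝ), y ^ (2*p-1) * (max (K - y^2) 0) ^ s
      = K ^ (p+s) * (Real.Gamma p * Real.Gamma (s+1) / Real.Gamma (p+s+1)) / 2 := by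
  set G : ℝ → ℝ := fun u => u ^ (p-1) * (max (K - u) 0) ^ s with hG
  have step1 : ∫ u in Ioi (0:ℝ), G u
      = 2 * ∫ y in Ioi (0:ℝ), y ^ (2*p-1) * (max (K - y^2) 0) ^ s := by
    rw [← integral_comp_rpow_Ioi_of_pos (g := G) (p := 2) two_pos, ← integral_const_mul]
    apply setIntegral_congr_fun measurableSet_Ioi
    intro x hx
    have hx0 : (0:ℝ) < x := hx
    have h2 : x ^ ((2:ℝ)) = x ^ (2:ℕ) := by
      rw [← Real.rpow_natCast x 2]; norm_num
    simp only [smul_eq_mul, hG]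
    rw [h2]
    have : ((x:ℝ)^(2:ℕ)) ^ (p-1) = x ^ (2*(p-1)) := by
      rw [← Real.rpow_natCast x 2, ← Real.rpow_mul hx0.le]; norm_num
    rw [this]
    have : (2:ℝ) * x ^ ((2:ℝ)-1) * (x ^ (2*(p-1)) * (max (K - x^(2:ℕ)) 0) ^ s)
        = 2 * (x ^ ((2:ℝ)-1) * x ^ (2*(p-1)) * (max (K - x^(2:ℕ)) 0) ^ s) := by ring
    rw [this, ← Real.rpow_add hx0, show (2:ℝ)-1 + 2*(p-1) = 2*p-1 by ring]
  have step2 : ∫ u in Ioi (0:ℝ), G u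
      = K ^ (p+s) * (Real.Gamma p * Real.Gamma (s+1) / Real.Gamma (p+s+1)) := by
    have := integral_comp_mul_left_Ioi G 0 hK
    rw [mul_zero] at this
    have hcongr : ∫ x in Ioi (0:ℝ), G (K * x)
        = ∫ x in Ioi (0:ℝ), K ^ (p-1+s) * (x ^ (p-1) * (max (1-x) 0) ^ s) := by
      apply setIntegral_congr_fun measurableSet_Ioi
      intro x hx
      have hx0 : (0:ℝ) < x := hx
      simp only [hG]
      rw [Real.mul_rpow hK.le hx0.le,
        show K - K * x = K * (1 - x) by ring,
        show max (K * (1-x)) 0 = K * max (1-x) 0 by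
          rw [mul_max_of_nonneg _ _ hK.le, mul_zero],
        Real.mul_rpow hK.le (le_max_right _ _), Real.rpow_add hK]
      ring
    rw [hcongr, integral_const_mul, J3 hp hs] at this
    rw [smul_eq_mul] at this
    have h2 : ∫ u in Ioi (0:ℝ), G u
        = K * (K ^ (p-1+s) * (Real.Gamma p * Real.Gamma (s+1) / Real.Gamma (p+s+1))) := by
      rw [this, ← mul_assoc, mul_inv_cancel₀ hK.ne', one_mul]
    have h3 : K ^ (p+s) = K * K ^ (p-1+s) := by
      rw [show p+s = 1+(p-1+s) by ring, Real.rpow_add hK, Real.rpow_one]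
    rw [h2, h3]
    ring
  linarith [step1, step2]


/-- The exponent `n = 2/(γ-1) - d`. -/
def nExp (d : ℕ) (γ : ℝ) : ℝ := 2 / (γ - 1) - d

/-- The normalizing constant
`c = (2γ/(γ-1))^{-1/(γ-1)} Γ(γ/(γ-1)) / (π^{d/2} Γ(n/2+1))`. -/
def cConst (d : ℕ) (γ : ℝ) : ℝ :=
  (2 * γ / (γ - 1)) ^ (-(1 / (γ - 1))) * Real.Gamma (γ / (γ - 1)) /
    (Real.pi ^ ((d : ℝ) / 2) * Real.Gamma (nExp d γ / 2 + 1))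

/-- The positive-part equilibrium function
`M_{ρ,u}(v) = c ((2γ/(γ-1)) ρ^{γ-1} - |v-u|²)_+^{n/2}` (the case `1 < γ < (d+2)/d`). -/
def Mpos (d : ℕ) (γ ρ : ℝ) (u v : EuclideanSpace ℝ (Fin d)) : ℝ :=
  cConst d γ * (max (2 * γ / (γ - 1) * ρ ^ (γ - 1) - ‖v - u‖ ^ 2) 0) ^ (nExp d γ / 2)

/-- Second velocity moment of the positive-part equilibrium function:
`∫ |v|² M_{ρ,u}(v) dv = ρ |u|² + d ρ^γ`. -/
theorem second_moment_Mpos (d : ℕ) (hd : 1 ≤ d) (γ : ℝ) (hγ : 1 < γ)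
    (hγ' : γ < ((d : ℝ) + 2) / (d : ℝ)) (ρ : ℝ) (hρ : 0 < ρ)
    (u : EuclideanSpace ℝ (Fin d)) :
    (∫ v : EuclideanSpace ℝ (Fin d), ‖v‖ ^ 2 * Mpos d γ ρ u v)
      = ρ * ‖u‖ ^ 2 + (d : ℝ) * ρ ^ γ := by
  haveI : Nonempty (Fin d) := Fin.pos_iff_nonempty.mp hd
  haveI : Nontrivial (EuclideanSpace ℝ (Fin d)) := inferInstance
  haveI hfd : FiniteDimensional ℝ (EuclideanSpace ℝ (Fin d)) := inferInstance
  have hdR : (0:ℝ) < d := by exact_mod_cast hd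
  have hγ1 : (0:ℝ) < γ - 1 := by linarith
  set A : ℝ := 2 * γ / (γ - 1) with hA
  have hApos : 0 < A := by positivity
  set K : ℝ := A * ρ ^ (γ - 1) with hK
  have hKpos : 0 < K := by positivity
  set s : ℝ := nExp d γ / 2 with hs
  have hspos : 0 < s := by
    have h1 : γ * d < (d:ℝ) + 2 := (lt_div_iff₀ hdR).mp hγ'
    have h2 : (d:ℝ) < 2 / (γ - 1) := by
      rw [lt_div_iff₀ hγ1]; nlinarith
    simp only [hs, nExp]
    linarith
  set c : ℝ := cConst d γ with hc
  set g : ℝ → ℝ := fun r => c * (max (K - r^2) 0) ^ s with hg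
  -- continuity and compact support
  have hgc : Continuous g := by
    apply continuous_const.mul
    rw [continuous_iff_continuousAt]
    intro x
    exact (Real.continuousAt_rpow_const _ _ (Or.inr hspos.le)).comp
      (by fun_prop : Continuous fun r : ℝ => max (K - r^2) 0).continuousAt
  have hgnorm_cont : Continuous fun w : EuclideanSpace ℝ (Fin d) => g ‖w‖ := hgc.comp continuous_norm
  have hgsupp : HasCompactSupport fun w : EuclideanSpace ℝ (Fin d) => g ‖w‖ := by
    apply HasCompactSupport.intro (isCompact_closedBall (0 : EuclideanSpace ℝ (Fin d)) (Real.sqrt K))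
    intro w hw
    simp only [Metric.mem_closedBall, dist_zero_right, not_le] at hw
    have h1 : K < ‖w‖^2 := by
      have := Real.sq_sqrt hKpos.le
      nlinarith [Real.sqrt_nonneg K, norm_nonneg w]
    simp only [hg]
    rw [max_eq_right (by linarith), Real.zero_rpow hspos.ne', mul_zero]
  have A1 : Integrable fun w : EuclideanSpace ℝ (Fin d) => g ‖w‖ :=
    hgnorm_cont.integrable_of_hasCompactSupport hgsupp
  have A2 : Integrable fun w : EuclideanSpace ℝ (Fin d) => ‖w‖^2 * g ‖w‖ :=
    ((continuous_norm.pow 2).mul hgnorm_cont).integrable_of_hasCompactSupport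
      (hgsupp.mul_left)
  have A3 : Integrable fun w : EuclideanSpace ℝ (Fin d) => (inner ℝ w u : ℝ) * g ‖w‖ :=
    ((continuous_id.inner continuous_const).mul hgnorm_cont).integrable_of_hasCompactSupport
      (hgsupp.mul_left)
  -- shift
  have hMg : ∀ w : EuclideanSpace ℝ (Fin d), Mpos d γ ρ u (w + u) = g ‖w‖ := by
    intro w
    simp only [Mpos, hg, add_sub_cancel_right]
    rfl
  have hshift : (∫ v : EuclideanSpace ℝ (Fin d), ‖v‖ ^ 2 * Mpos d γ ρ u v) = ∫ w : EuclideanSpace ℝ (Fin d), ‖w + u‖^2 * g ‖w‖ := by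
    rw [← integral_add_right_eq_self (fun v : EuclideanSpace ℝ (Fin d) => ‖v‖ ^ 2 * Mpos d γ ρ u v) u]
    congr 1
    ext w
    rw [hMg w]
  -- expand and split
  have hexpand : ∀ w : EuclideanSpace ℝ (Fin d), ‖w + u‖^2 * g ‖w‖
      = (‖w‖^2 * g ‖w‖ + ‖u‖^2 * (g ‖w‖)) + 2 * ((inner ℝ w u : ℝ) * g ‖w‖) := by
    intro w
    rw [norm_add_sq_real]
    ring
  have hodd : (∫ w : EuclideanSpace ℝ (Fin d), (inner ℝ w u : ℝ) * g ‖w‖) = 0 := by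
    have h1 := integral_neg_eq_self (fun w : EuclideanSpace ℝ (Fin d) => (inner ℝ w u : ℝ) * g ‖w‖) volume
    have h2 : (∫ w : EuclideanSpace ℝ (Fin d), (inner ℝ (-w) u : ℝ) * g ‖-w‖)
        = - ∫ w : EuclideanSpace ℝ (Fin d), (inner ℝ w u : ℝ) * g ‖w‖ := by
      rw [← integral_neg]
      congr 1
      ext w
      simp [inner_neg_left]
    rw [h2] at h1
    linarith
  have hsplit : (∫ w : EuclideanSpace ℝ (Fin d), ‖w + u‖^2 * g ‖w‖)
      = (∫ w : EuclideanSpace ℝ (Fin d), ‖w‖^2 * g ‖w‖) + ‖u‖^2 * ∫ w : EuclideanSpace ℝ (Fin d), g ‖w‖ := by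
    have B1 : Integrable fun w : EuclideanSpace ℝ (Fin d) => ‖w‖^2 * g ‖w‖ + ‖u‖^2 * g ‖w‖ :=
      A2.add (A1.const_mul _)
    have B2 : Integrable fun w : EuclideanSpace ℝ (Fin d) => 2 * ((inner ℝ w u : ℝ) * g ‖w‖) := A3.const_mul 2
    simp_rw [hexpand]
    rw [integral_add B1 B2, integral_add A2 (A1.const_mul _),
      integral_const_mul (2:ℝ), hodd, mul_zero, add_zero, integral_const_mul]
  -- radial reduction
  set V : ℝ := (volume (Metric.ball (0 : EuclideanSpace ℝ (Fin d)) 1)).toReal with hV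
  have hrad : ∀ f : ℝ → ℝ, (∫ w : EuclideanSpace ℝ (Fin d), f ‖w‖)
      = (d:ℝ) * (V * ∫ y in Ioi (0:ℝ), y ^ (d-1 : ℕ) * f y) := by
    intro f
    rw [MeasureTheory.integral_fun_norm_addHaar volume f]
    simp only [finrank_euclideanSpace_fin, nsmul_eq_mul, smul_eq_mul, hV]
    rfl

  -- notation
  set d2 : ℝ := (d:ℝ)/2 with hd2
  have hd2pos : 0 < d2 := by positivity
  set X : ℝ := A ^ (1/(γ-1)) with hX
  have hXpos : 0 < X := Real.rpow_pos_of_pos hApos _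
  set G1 : ℝ := Real.Gamma d2 with hG1
  set G2 : ℝ := Real.Gamma (s+1) with hG2
  set G3 : ℝ := Real.Gamma (γ/(γ-1)) with hG3
  have hG1pos : 0 < G1 := Real.Gamma_pos_of_pos hd2pos
  have hG2pos : 0 < G2 := Real.Gamma_pos_of_pos (by linarith)
  have hG3pos : 0 < G3 := Real.Gamma_pos_of_pos (by positivity)
  have hP : (0:ℝ) < π ^ d2 := Real.rpow_pos_of_pos Real.pi_pos _
  -- key arithmetic facts
  have hβ : d2 + s = 1/(γ-1) := by
    simp only [hd2, hs, nExp]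
    field_simp
    ring
  have hγγ : 1/(γ-1) + 1 = γ/(γ-1) := by field_simp; ring
  have hKβ : K ^ (1/(γ-1)) = X * ρ := by
    rw [hK, Real.mul_rpow hApos.le (Real.rpow_nonneg hρ.le _), ← Real.rpow_mul hρ.le,
      mul_one_div, div_self hγ1.ne', Real.rpow_one, hX]
  have hcval : c = X⁻¹ * G3 / (π ^ d2 * G2) := by
    rw [hc, cConst, ← hs, ← hG2, ← hG3, ← hd2, ← hA, Real.rpow_neg hApos.le, hX]
  have hGd2 : Real.Gamma (d2 + 1) = d2 * G1 := Real.Gamma_add_one hd2pos.ne'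
  have hGb : Real.Gamma (d2 + s + 1) = G3 := by rw [hβ, hγγ, hG3]
  have hGb2 : Real.Gamma (d2 + 1 + s + 1) = (γ/(γ-1)) * G3 := by
    rw [show d2+1+s+1 = (d2+s)+1+1 by ring, hβ, hγγ,
      Real.Gamma_add_one (by positivity : γ/(γ-1) ≠ 0), hG3]
  have hVval : V = π ^ d2 / Real.Gamma (d2 + 1) := by
    have hsq : (Real.sqrt π) ^ (d:ℕ) = π ^ d2 := by
      rw [Real.sqrt_eq_rpow, ← Real.rpow_natCast (π ^ ((1:ℝ)/2)) d,
        ← Real.rpow_mul Real.pi_pos.le]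
      congr 1
      rw [hd2]; ring
    rw [hV, EuclideanSpace.volume_ball]
    simp only [Fintype.card_fin, ENNReal.ofReal_one, one_pow, one_mul]
    rw [ENNReal.toReal_ofReal (by positivity), hsq, ← hd2]
  -- the 1D integrals
  have h1d0 : (∫ y in Ioi (0:ℝ), (y:ℝ) ^ (d-1 : ℕ) * g y)
      = c * (K ^ (d2 + s) * (G1 * G2 / Real.Gamma (d2+s+1)) / 2) := by
    rw [hG1, hG2, ← J_eq hKpos hspos hd2pos, ← integral_const_mul]
    apply setIntegral_congr_fun measurableSet_Ioi
    intro y hy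
    have hy0 : (0:ℝ) < y := hy
    simp only [hg]
    rw [show 2*d2-1 = ((d-1:ℕ):ℝ) by rw [Nat.cast_sub hd, Nat.cast_one, hd2]; ring,
      Real.rpow_natCast]
    ring
  have h1d2 : (∫ y in Ioi (0:ℝ), (y:ℝ) ^ (d-1 : ℕ) * (y^2 * g y))
      = c * (K ^ (d2+1+s) * (Real.Gamma (d2+1) * G2 / Real.Gamma (d2+1+s+1)) / 2) := by
    rw [hG2, ← J_eq hKpos hspos (by positivity : (0:ℝ) < d2+1), ← integral_const_mul]
    apply setIntegral_congr_fun measurableSet_Ioi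
    intro y hy
    have hy0 : (0:ℝ) < y := hy
    simp only [hg]
    rw [show 2*(d2+1)-1 = ((d+1:ℕ):ℝ) by rw [Nat.cast_add, Nat.cast_one, hd2]; ring,
      Real.rpow_natCast, show (d+1:ℕ) = (d-1) + 2 by omega, pow_add]
    ring
  have hKβ1 : K ^ (d2+1+s) = X * ρ * K := by
    rw [show d2+1+s = (d2+s)+1 by ring, hβ, Real.rpow_add hKpos, Real.rpow_one, hKβ]
  -- assemble
  have E0 : (∫ w : EuclideanSpace ℝ (Fin d), g ‖w‖) = ρ := by
    rw [hrad g, h1d0, hVval, hcval, hGd2, hGb, hβ, hKβ,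
      show (d:ℝ) = 2 * d2 by rw [hd2]; ring]
    field_simp
  have E2 : (∫ w : EuclideanSpace ℝ (Fin d), ‖w‖^2 * g ‖w‖) = (d:ℝ) * ρ ^ γ := by
    have := hrad (fun r => r^2 * g r)
    rw [show (∫ w : EuclideanSpace ℝ (Fin d), ‖w‖^2 * g ‖w‖)
      = ∫ w : EuclideanSpace ℝ (Fin d), (fun r => r^2 * g r) ‖w‖ from rfl, this,
      h1d2, hVval, hcval, hGd2, hGb2, hKβ1, hK, hA,
      show ρ ^ γ = ρ * ρ ^ (γ-1) by
        rw [show γ = 1 + (γ-1) by ring, Real.rpow_add hρ, Real.rpow_one]; ring_nf]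
    have hγ0 : γ ≠ 0 := by positivity
    field_simp
  rw [hshift, hsplit, E0, E2]
  ring
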